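/- arXiv:2010.06093 — 4 statements merged into one kernel-verified Lean document; each statement's English description precedes it below -/
import Mathlib

section
/- Let O, P be elements of a Banach (possibly noncommutative) ring with O idempotent (O² = O) and ‖O − P‖ < ‖O‖⁻³ where the norm is submultiplicative and ‖O‖ ≥ 1. Then ‖P² − P‖ < ‖O‖⁻², using the identity P² − P = (P − O)(P + O − 1) + O(P − O) + (O − P)O and the ultrametric inequality. -/
/-- after Kedlaya–Liu [KL16, Lemma 5.6.8], key estimate.
Let `O, P` be elements of a (possibly noncommutative) Banach ring whose norm is
submultiplicative and nonarchimedean, with `O` idempotent (`O * O = O`),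
`‖O‖ ≥ 1`, and `‖O − P‖ < ‖O‖⁻³`.  Then `‖P² − P‖ < ‖O‖⁻²`. -/
theorem stmt1 {R : Type*} [NormedRing R] [CompleteSpace R] [IsUltrametricDist R]
    (O P : R) (hO : O * O = O) (hO1 : 1 ≤ ‖O‖)
    (hOP : ‖O - P‖ < (‖O‖ ^ 3)⁻¹) :
    ‖P * P - P‖ < (‖O‖ ^ 2)⁻¹ := by
  have hOpos : (0:ℝ) < ‖O‖ := lt_of_lt_of_le one_pos hO1
  have hinv3 : (‖O‖ ^ 3)⁻¹ ≤ 1 := by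
    rw [inv_le_one_iff₀]
    right
    exact one_le_pow₀ hO1
  have hOPle : ‖O - P‖ ≤ ‖O‖ := (hOP.le.trans hinv3).trans hO1
  have hP : ‖P‖ ≤ ‖O‖ := by
    calc ‖P‖ = ‖O - (O - P)‖ := by rw [sub_sub_cancel]
    _ = ‖O + -(O - P)‖ := by rw [sub_eq_add_neg]
    _ ≤ max ‖O‖ ‖-(O - P)‖ := IsUltrametricDist.norm_add_le_max _ _
    _ = max ‖O‖ ‖O - P‖ := by rw [norm_neg]
    _ ≤ ‖O‖ := max_le le_rfl hOPle
  have hid : P * P - P = (P - O) * P + O * (P - O) + (O - P) := by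
    have h2 : (P - O) * P + O * (P - O) + (O - P) = P * P - P + (O - O * O) := by
      noncomm_ring
    rw [h2, hO, sub_self, add_zero]
  have hkey : ∀ x y : R, ‖x‖ ≤ ‖O - P‖ → ‖y‖ ≤ ‖O‖ → ‖x * y‖ < (‖O‖ ^ 2)⁻¹ := by
    intro x y hx hy
    calc ‖x * y‖ ≤ ‖x‖ * ‖y‖ := norm_mul_le _ _
    _ ≤ ‖O - P‖ * ‖O‖ := by
        apply mul_le_mul hx hy (norm_nonneg _) (norm_nonneg _)
    _ < (‖O‖ ^ 3)⁻¹ * ‖O‖ := by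
        exact mul_lt_mul_of_pos_right hOP hOpos
    _ = (‖O‖ ^ 2)⁻¹ := by field_simp
  have h1 : ‖(P - O) * P‖ < (‖O‖ ^ 2)⁻¹ := hkey _ _ (le_of_eq (norm_sub_rev _ _)) hP
  have h2 : ‖O * (P - O)‖ < (‖O‖ ^ 2)⁻¹ := by
    calc ‖O * (P - O)‖ ≤ ‖O‖ * ‖P - O‖ := norm_mul_le _ _
    _ = ‖P - O‖ * ‖O‖ := mul_comm _ _
    _ ≤ ‖O - P‖ * ‖O‖ := by rw [norm_sub_rev]
    _ < (‖O‖ ^ 3)⁻¹ * ‖O‖ := mul_lt_mul_of_pos_right hOP hOpos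
    _ = (‖O‖ ^ 2)⁻¹ := by field_simp
  have h3 : ‖O - P‖ < (‖O‖ ^ 2)⁻¹ := by
    apply hOP.trans_le
    apply inv_anti₀ (by positivity)
    exact pow_le_pow_right₀ hO1 (by norm_num)
  rw [hid]
  calc ‖(P - O) * P + O * (P - O) + (O - P)‖
      ≤ max ‖(P - O) * P + O * (P - O)‖ ‖O - P‖ := IsUltrametricDist.norm_add_le_max _ _
    _ ≤ max (max ‖(P - O) * P‖ ‖O * (P - O)‖) ‖O - P‖ :=
        max_le_max (IsUltrametricDist.norm_add_le_max _ _) le_rfl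
    _ < (‖O‖ ^ 2)⁻¹ := max_lt (max_lt h1 h2) h3
end

section
/- Let Π, Π₁, Π₂, Π₁₂ be (possibly noncommutative) rings fitting in a short exact sequence of Π-bimodules 0 → Π → Π₁ ⊕ Π₂ → Π₁₂ → 0, where the map Π → Π₁ ⊕ Π₂ is the diagonal of two ring homomorphisms and the map Π₁ ⊕ Π₂ → Π₁₂ is the difference of two ring homomorphisms. Given a glueing datum of finitely generated right modules M₁ over Π₁, M₂ over Π₂, M₁₂ over Π₁₂ with base-change isomorphisms M₁ ⊗_{Π₁} Π₁₂ ≅ M₁₂ ≅ M₂ ⊗_{Π₂} Π₁₂, let M be the kernel of (m₁, m₂) ↦ f₁(m₁) − f₂(m₂) : M₁ ⊕ M₂ → M₁₂. If the natural map M ⊗_Π Π₁ → M₁ is surjective, then the natural map M ⊗_Π Π₂ → M₂ is surjective and the map M₁ ⊕ M₂ → M₁₂ is surjective. -/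
/-- after Kedlaya–Liu [KL15, Lemma 1.3.8], noncommutative glueing.
Given (possibly noncommutative) rings `R, R₁, R₂, R₁₂` fitting in a short exact
sequence `0 → R → R₁ ⊕ R₂ → R₁₂ → 0` (diagonal and difference maps of ring
homomorphisms), and a glueing datum of finitely generated modules
`M₁, M₂, M₁₂` with base-change comparison maps `f₁, f₂` (semilinear, whose
base changes are isomorphisms; here the surjectivity part of the base-change
isomorphisms is recorded as the span conditions `hf₁, hf₂`), let
`M := ker((m₁, m₂) ↦ f₁ m₁ − f₂ m₂)`.  If the natural map `M ⊗_R R₁ → M₁` is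
surjective — equivalently, the first projections of `M` span `M₁` over `R₁` —
then `M ⊗_R R₂ → M₂` is surjective (the second projections of `M` span `M₂`
over `R₂`) and the map `M₁ ⊕ M₂ → M₁₂` is surjective. -/
theorem stmt2 {R R₁ R₂ R₁₂ : Type*} [Ring R] [Ring R₁] [Ring R₂] [Ring R₁₂]
    (g₁ : R →+* R₁) (g₂ : R →+* R₂) (h₁ : R₁ →+* R₁₂) (h₂ : R₂ →+* R₁₂)
    (hcomm : h₁.comp g₁ = h₂.comp g₂)
    (hinj : Function.Injective fun x => (g₁ x, g₂ x))
    (hexact : ∀ a b, h₁ a = h₂ b → ∃ x, g₁ x = a ∧ g₂ x = b)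
    (hdiffsurj : ∀ c : R₁₂, ∃ a b, h₁ a - h₂ b = c)
    {M₁ M₂ M₁₂ : Type*} [AddCommGroup M₁] [AddCommGroup M₂] [AddCommGroup M₁₂]
    [Module R₁ M₁] [Module R₂ M₂] [Module R₁₂ M₁₂]
    [Module.Finite R₁ M₁] [Module.Finite R₂ M₂] [Module.Finite R₁₂ M₁₂]
    (f₁ : M₁ →ₛₗ[h₁] M₁₂) (f₂ : M₂ →ₛₗ[h₂] M₁₂)
    (hf₁ : Submodule.span R₁₂ (Set.range f₁) = ⊤)
    (hf₂ : Submodule.span R₁₂ (Set.range f₂) = ⊤)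
    (hM₁ : Submodule.span R₁ {m₁ : M₁ | ∃ m₂ : M₂, f₁ m₁ = f₂ m₂} = ⊤) :
    Submodule.span R₂ {m₂ : M₂ | ∃ m₁ : M₁, f₁ m₁ = f₂ m₂} = ⊤ ∧
      Function.Surjective fun p : M₁ × M₂ => f₁ p.1 - f₂ p.2 := by
  classical
  set S₁ : Set M₁ := {m₁ : M₁ | ∃ m₂ : M₂, f₁ m₁ = f₂ m₂} with hS₁
  set S₂ : Set M₂ := {m₂ : M₂ | ∃ m₁ : M₁, f₁ m₁ = f₂ m₂} with hS₂
  -- Step 1: the images of S₁ span M₁₂ over R₁₂.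
  have hspan : Submodule.span R₁₂ (f₁ '' S₁) = ⊤ := by
    rw [eq_top_iff, ← hf₁, Submodule.span_le]
    rintro _ ⟨m₁, rfl⟩
    have hm : m₁ ∈ Submodule.span R₁ S₁ := hM₁ ▸ Submodule.mem_top
    induction hm using Submodule.span_induction with
    | mem m hm => exact Submodule.subset_span ⟨m, hm, rfl⟩
    | zero => simpa using Submodule.zero_mem _
    | add a b _ _ ha hb => rw [map_add]; exact Submodule.add_mem _ ha hb
    | smul a m _ hm => rw [f₁.map_smulₛₗ]; exact Submodule.smul_mem _ _ hm
  -- Step 2: key claim.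
  have key : ∀ x : M₁₂, ∃ m₁ : M₁, ∃ n₂ ∈ Submodule.span R₂ S₂, x = f₁ m₁ - f₂ n₂ := by
    intro x
    have hx : x ∈ Submodule.span R₁₂ (f₁ '' S₁) := hspan ▸ Submodule.mem_top
    rw [Submodule.mem_span_set'] at hx
    obtain ⟨n, c, g, hsum⟩ := hx
    have hg : ∀ i : Fin n, ∃ s : M₁, ∃ s' : M₂, ∃ a : R₁, ∃ b : R₂,
        f₁ s = f₂ s' ∧ (g i : M₁₂) = f₁ s ∧ h₁ a - h₂ b = c i := by
      intro i
      obtain ⟨y, hy⟩ := g i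
      obtain ⟨s, hs, hys⟩ := hy
      obtain ⟨s', hss'⟩ := hs
      obtain ⟨a, b, hab⟩ := hdiffsurj (c i)
      exact ⟨s, s', a, b, hss', hys.symm, hab⟩
    choose s s' a b hss' hgs hab using hg
    refine ⟨∑ i, a i • s i, ∑ i, b i • s' i, ?_, ?_⟩
    · exact Submodule.sum_mem _ fun i _ =>
        Submodule.smul_mem _ _ (Submodule.subset_span ⟨s i, hss' i⟩)
    · rw [← hsum, map_sum, map_sum]
      rw [← Finset.sum_sub_distrib]
      refine Finset.sum_congr rfl fun i _ => ?_
      rw [f₁.map_smulₛₗ, f₂.map_smulₛₗ, hgs i, ← hss' i, ← sub_smul, hab i]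
  constructor
  · rw [eq_top_iff]
    intro m₂ _
    obtain ⟨m₁, n₂, hn₂, hx⟩ := key (f₂ m₂)
    have hmem : m₂ + n₂ ∈ S₂ := by
      refine ⟨m₁, ?_⟩
      rw [map_add]
      rw [eq_sub_iff_add_eq] at hx
      exact hx.symm
    have : m₂ = (m₂ + n₂) - n₂ := by abel
    rw [this]
    exact Submodule.sub_mem _ (Submodule.subset_span hmem) hn₂
  · intro x
    obtain ⟨m₁, n₂, _, hx⟩ := key x
    exact ⟨(m₁, n₂), hx.symm⟩
end

section
/- Let f₁ : Π₁ → Γ and f₂ : Π₂ → Γ be bounded homomorphisms of (possibly noncommutative) nonarchimedean Banach rings such that the sum map Π₁ ⊕ Π₂ → Γ, (a,b) ↦ f₁(a) + f₂(b), is strictly surjective. Then there exists a constant c > 0 such that for every n ≥ 1 and every matrix I ∈ GL_n(Γ) with ‖I − 1‖ ≤ c, there exist invertible matrices I₁ ∈ GL_n(Π₁) and I₂ ∈ GL_n(Π₂) with I = f₁(I₁)·f₂(I₂). -/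
/-!
A bounded section `e ↦ (a e, b e)` of the sum map turns `X = 1 + E` into
`(1 - φ₁ (a E)) * X * (1 - φ₂ (b E)) = 1 + O(‖E‖²)`, because `φ₁ (a E) + φ₂ (b E) = E` kills the
first-order terms. Iterating this Newton step from `M` drives `M` to `1` quadratically, hence
geometrically, and the accumulated left and right correction factors are partial products whose
increments decay geometrically. In an ultrametric complete ring they converge to limits within
distance `< 1` of `1`, hence to units `u₁`, `u₂` with `φ₁ u₁ * M * φ₂ u₂ = 1`. For matrices, the
entrywise sup norm over an ultrametric ring is submultiplicative, so all of this applies with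
constants independent of the size.
-/

open Filter Topology IsUltrametricDist

theorem le_mul_half_pow_of_le_mul_sq {x : ℕ → ℝ} {D c : ℝ} (hD : 0 ≤ D) (hc : c ≤ 1)
    (hDc : D * c ≤ 1 / 2) (hx : ∀ k, 0 ≤ x k) (hx₀ : x 0 ≤ c)
    (hsucc : ∀ k, x k ≤ 1 → x (k + 1) ≤ D * x k ^ 2) (k : ℕ) : x k ≤ c * (1 / 2) ^ k := by
  induction k with
  | zero => simpa using hx₀
  | succ k ih =>
    have hc₀ : 0 ≤ c := (hx 0).trans hx₀
    have hxc : x k ≤ c :=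
      ih.trans (mul_le_of_le_one_right hc₀ (pow_le_one₀ (by norm_num) (by norm_num)))
    calc x (k + 1) ≤ D * x k ^ 2 := hsucc k (hxc.trans hc)
      _ ≤ D * (c * (c * (1 / 2) ^ k)) := by
          rw [sq]; exact mul_le_mul_of_nonneg_left (mul_le_mul hxc ih (hx k) hc₀) hD
      _ = D * c * (c * (1 / 2) ^ k) := by ring
      _ ≤ 1 / 2 * (c * (1 / 2) ^ k) := by gcongr
      _ = c * (1 / 2) ^ (k + 1) := by ring

theorem exists_unit_tendsto_of_norm_succ_sub_le {A : Type*} [NormedRing A] [CompleteSpace A]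
    [IsUltrametricDist A] {P : ℕ → A} {r : ℝ} (hr : 0 ≤ r)
    (hrT : r * max ‖(1 : A)‖ 1 < 1) (h0 : P 0 = 1)
    (hsucc : ∀ k, ‖P (k + 1) - P k‖ ≤ r * (1 / 2) ^ k * ‖P k‖) :
    ∃ u : Aˣ, Tendsto P atTop (𝓝 u) := by
  set T := max ‖(1 : A)‖ 1
  have hT : 1 ≤ T := le_max_right _ _
  have hnorm {k} (hk : ‖P k - 1‖ ≤ r * T) : ‖P k‖ ≤ T :=
    calc ‖P k‖ = ‖(P k - 1) + 1‖ := by rw [sub_add_cancel]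
      _ ≤ max ‖P k - 1‖ ‖(1 : A)‖ := norm_add_le_max _ _
      _ ≤ T := max_le (hk.trans (hrT.le.trans hT)) (le_max_left _ _)
  have hdiff {k} (hk : ‖P k - 1‖ ≤ r * T) : ‖P (k + 1) - P k‖ ≤ r * T * (1 / 2) ^ k :=
    calc ‖P (k + 1) - P k‖ ≤ r * (1 / 2) ^ k * ‖P k‖ := hsucc k
      _ ≤ r * (1 / 2) ^ k * T := by gcongr; exact hnorm hk
      _ = r * T * (1 / 2) ^ k := by ring
  have hball (k) : ‖P k - 1‖ ≤ r * T := by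
    induction k with
    | zero => rw [h0, sub_self, norm_zero]; positivity
    | succ k ih =>
      calc ‖P (k + 1) - 1‖ = ‖(P k - 1) + (P (k + 1) - P k)‖ := by rw [sub_add_sub_cancel']
        _ ≤ max ‖P k - 1‖ ‖P (k + 1) - P k‖ := norm_add_le_max _ _
        _ ≤ r * T := max_le ih ((hdiff ih).trans
            (mul_le_of_le_one_right (by positivity) (pow_le_one₀ (by norm_num) (by norm_num))))
  obtain ⟨L, hL⟩ := cauchySeq_tendsto_of_complete <|
    cauchySeq_of_le_geometric (f := P) (1 / 2) (r * T) (by norm_num) fun k => by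
      rw [dist_eq_norm, norm_sub_rev]; exact hdiff (hball k)
  have hL1 : ‖1 - L‖ < 1 := by
    rw [norm_sub_rev]
    exact (le_of_tendsto (hL.sub_const 1).norm (Eventually.of_forall hball)).trans_lt hrT
  exact ⟨Units.oneSub (1 - L) hL1, by rwa [Units.val_oneSub, sub_sub_cancel]⟩

/-- A bounded section of the sum map `A₁ × A₂ → B`, `(a, b) ↦ φ₁ a + φ₂ b`; strict surjectivity
provides one by choice. -/
structure SumLift {A₁ A₂ B : Type*} [NormedRing A₁] [NormedRing A₂] [NormedRing B]
    (φ₁ : A₁ →+* B) (φ₂ : A₂ →+* B) (K : ℝ) where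
  left : B → A₁
  right : B → A₂
  map_left_add_map_right (e : B) : φ₁ (left e) + φ₂ (right e) = e
  norm_left_le (e : B) : ‖left e‖ ≤ K * ‖e‖
  norm_right_le (e : B) : ‖right e‖ ≤ K * ‖e‖

namespace SumLift

variable {A₁ A₂ B : Type*} [NormedRing A₁] [NormedRing A₂] [NormedRing B]
  {φ₁ : A₁ →+* B} {φ₂ : A₂ →+* B} {K : ℝ}

def step (s : SumLift φ₁ φ₂ K) (X : B) : B :=
  (1 - φ₁ (s.left (X - 1))) * X * (1 - φ₂ (s.right (X - 1)))

def leftProd (s : SumLift φ₁ φ₂ K) (M : B) : ℕ → A₁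
  | 0 => 1
  | k + 1 => (1 - s.left (s.step^[k] M - 1)) * leftProd s M k

def rightProd (s : SumLift φ₁ φ₂ K) (M : B) : ℕ → A₂
  | 0 => 1
  | k + 1 => rightProd s M k * (1 - s.right (s.step^[k] M - 1))

theorem step_iterate_eq (s : SumLift φ₁ φ₂ K) (M : B) (k : ℕ) :
    s.step^[k] M = φ₁ (s.leftProd M k) * M * φ₂ (s.rightProd M k) := by
  induction k with
  | zero => simp [leftProd, rightProd]
  | succ k ih =>
    rw [Function.iterate_succ_apply', step, leftProd, rightProd]
    generalize s.left (s.step^[k] M - 1) = a, s.right (s.step^[k] M - 1) = b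
    rw [ih]
    simp only [map_mul, map_sub, map_one, mul_assoc]

variable [IsUltrametricDist B]

theorem norm_step_sub_one_le (s : SumLift φ₁ φ₂ K) (hK : 1 ≤ K)
    (hφ₁ : ∀ x, ‖φ₁ x‖ ≤ K * ‖x‖) (hφ₂ : ∀ x, ‖φ₂ x‖ ≤ K * ‖x‖) {X : B} (hX : ‖X - 1‖ ≤ 1) :
    ‖s.step X - 1‖ ≤ K ^ 4 * ‖X - 1‖ ^ 2 := by
  have hK₀ : 0 ≤ K := zero_le_one.trans hK
  set E := X - 1
  set U := φ₁ (s.left E)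
  set V := φ₂ (s.right E)
  have hU : ‖U‖ ≤ K ^ 2 * ‖E‖ :=
    calc ‖U‖ ≤ K * ‖s.left E‖ := hφ₁ _
      _ ≤ K * (K * ‖E‖) := by gcongr; exact s.norm_left_le E
      _ = K ^ 2 * ‖E‖ := by ring
  have hV : ‖V‖ ≤ K ^ 2 * ‖E‖ :=
    calc ‖V‖ ≤ K * ‖s.right E‖ := hφ₂ _
      _ ≤ K * (K * ‖E‖) := by gcongr; exact s.norm_right_le E
      _ = K ^ 2 * ‖E‖ := by ring
  have hE : ‖E‖ ≤ K ^ 2 * ‖E‖ := le_mul_of_one_le_left (norm_nonneg _) (one_le_pow₀ hK)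
  have hmul {P Q : B} (hP : ‖P‖ ≤ K ^ 2 * ‖E‖) (hQ : ‖Q‖ ≤ K ^ 2 * ‖E‖) :
      ‖P * Q‖ ≤ K ^ 4 * ‖E‖ ^ 2 :=
    calc ‖P * Q‖ ≤ ‖P‖ * ‖Q‖ := norm_mul_le _ _
      _ ≤ (K ^ 2 * ‖E‖) * (K ^ 2 * ‖E‖) := mul_le_mul hP hQ (norm_nonneg _) (by positivity)
      _ = K ^ 4 * ‖E‖ ^ 2 := by ring
  have hUEV : ‖U * E * V‖ ≤ K ^ 4 * ‖E‖ ^ 2 :=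
    calc ‖U * E * V‖ ≤ ‖U‖ * ‖E‖ * ‖V‖ := norm_mul₃_le
      _ ≤ K ^ 2 * ‖E‖ * 1 * (K ^ 2 * ‖E‖) := by gcongr
      _ = K ^ 4 * ‖E‖ ^ 2 := by ring
  -- the first-order terms cancel because `U + V = E`
  have hexpand : s.step X - 1 = -(U * E) + -(E * V) + U * V + U * E * V := by
    have hstep : s.step X = (1 - U) * (1 + E) * (1 - V) := by
      simp only [step, U, V, E, add_sub_cancel]
    have hUV : U + V = E := s.map_left_add_map_right E
    rw [hstep]
    clear_value U V E
    rw [← hUV]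
    noncomm_ring
  rw [hexpand]
  refine (norm_add_le_max _ _).trans (max_le ((norm_add_le_max _ _).trans (max_le ?_ ?_)) hUEV)
  · refine (norm_add_le_max _ _).trans (max_le ?_ ?_) <;> rw [norm_neg]
    exacts [hmul hU hE, hmul hE hV]
  · exact hmul hU hV

theorem norm_step_iterate_sub_one_le (s : SumLift φ₁ φ₂ K) (hK : 1 ≤ K)
    (hφ₁ : ∀ x, ‖φ₁ x‖ ≤ K * ‖x‖) (hφ₂ : ∀ x, ‖φ₂ x‖ ≤ K * ‖x‖) {c : ℝ}
    (hc : K ^ 4 * c ≤ 1 / 2) {M : B} (hM : ‖M - 1‖ ≤ c) (k : ℕ) :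
    ‖s.step^[k] M - 1‖ ≤ c * (1 / 2) ^ k := by
  have hK4 : 1 ≤ K ^ 4 := one_le_pow₀ hK
  refine le_mul_half_pow_of_le_mul_sq (x := fun k => ‖s.step^[k] M - 1‖) (by positivity)
    (by nlinarith) hc (fun _ => norm_nonneg _) hM (fun k hk => ?_) k
  simpa only [Function.iterate_succ_apply'] using s.norm_step_sub_one_le hK hφ₁ hφ₂ hk

theorem exists_units_eq_map_mul_map [CompleteSpace A₁] [CompleteSpace A₂]
    [IsUltrametricDist A₁] [IsUltrametricDist A₂] (s : SumLift φ₁ φ₂ K) (hK : 1 ≤ K)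
    (hφ₁ : ∀ x, ‖φ₁ x‖ ≤ K * ‖x‖) (hφ₂ : ∀ x, ‖φ₂ x‖ ≤ K * ‖x‖)
    (h₁ : ‖(1 : A₁)‖ ≤ K) (h₂ : ‖(1 : A₂)‖ ≤ K)
    {c : ℝ} (hc : K ^ 4 * c ≤ 1 / 2) {M : B} (hM : ‖M - 1‖ ≤ c) :
    ∃ (u₁ : A₁ˣ) (u₂ : A₂ˣ), M = φ₁ u₁ * φ₂ u₂ := by
  have hK₀ : 0 ≤ K := zero_le_one.trans hK
  have hc₀ : 0 ≤ c := (norm_nonneg _).trans hM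
  have hX := s.norm_step_iterate_sub_one_le hK hφ₁ hφ₂ hc hM
  have hKcT {T : ℝ} (hT : max T 1 ≤ K) : K * c * max T 1 < 1 := by
    have : K * c * max T 1 ≤ K ^ 4 * c := by
      calc K * c * max T 1 ≤ K * c * K := by gcongr
        _ = K ^ 2 * c := by ring
        _ ≤ K ^ 4 * c := by gcongr; norm_num
    linarith
  have hcorr (k : ℕ) {t : ℝ} (ht : t ≤ K * ‖s.step^[k] M - 1‖) : t ≤ K * c * (1 / 2) ^ k := by
    rw [mul_assoc]; exact ht.trans (by gcongr; exact hX k)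
  obtain ⟨u₁, hu₁⟩ := exists_unit_tendsto_of_norm_succ_sub_le (P := s.leftProd M)
    (by positivity) (hKcT (max_le h₁ hK)) rfl fun k => by
      rw [leftProd, sub_mul, one_mul, sub_sub_cancel_left, norm_neg]
      exact (norm_mul_le _ _).trans (by gcongr; exact hcorr k (s.norm_left_le _))
  obtain ⟨u₂, hu₂⟩ := exists_unit_tendsto_of_norm_succ_sub_le (P := s.rightProd M)
    (by positivity) (hKcT (max_le h₂ hK)) rfl fun k => by
      rw [rightProd, mul_sub, mul_one, sub_sub_cancel_left, norm_neg]
      exact (norm_mul_le _ _).trans (by rw [mul_comm]; gcongr; exact hcorr k (s.norm_right_le _))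
  have hlim : Tendsto (fun k => s.step^[k] M) atTop (𝓝 (φ₁ u₁ * M * φ₂ u₂)) := by
    simp only [s.step_iterate_eq]
    have hφ₁c := AddMonoidHomClass.continuous_of_bound φ₁ K hφ₁
    have hφ₂c := AddMonoidHomClass.continuous_of_bound φ₂ K hφ₂
    exact (((hφ₁c.tendsto _).comp hu₁).mul_const M).mul ((hφ₂c.tendsto _).comp hu₂)
  have hone : Tendsto (fun k => s.step^[k] M) atTop (𝓝 1) :=
    tendsto_iff_norm_sub_tendsto_zero.2 <| squeeze_zero (fun _ => norm_nonneg _) hX <| by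
      simpa using (tendsto_pow_atTop_nhds_zero_of_lt_one (r := (1 / 2 : ℝ))
        (by norm_num) (by norm_num)).const_mul c
  have heq : φ₁ u₁ * M * φ₂ u₂ = 1 := tendsto_nhds_unique hlim hone
  refine ⟨u₁⁻¹, u₂⁻¹, ?_⟩
  calc M = φ₁ ↑u₁⁻¹ * (φ₁ u₁ * M * φ₂ u₂) * φ₂ ↑u₂⁻¹ := by
        simp only [mul_assoc, ← map_mul φ₂, Units.mul_inv, map_one, mul_one]
        simp only [← mul_assoc, ← map_mul φ₁, Units.inv_mul, map_one, one_mul]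
    _ = φ₁ ↑u₁⁻¹ * φ₂ ↑u₂⁻¹ := by rw [heq, mul_one]

end SumLift

namespace Matrix

attribute [local instance] Matrix.normedAddCommGroup

variable {l m n R : Type*} [Fintype l] [Fintype m] [Fintype n]

theorem norm_map_le {S : Type*} [NormedAddCommGroup R] [NormedAddCommGroup S] {f : R → S}
    {C : ℝ} (hC : 0 ≤ C) (hf : ∀ x, ‖f x‖ ≤ C * ‖x‖) (A : Matrix m n R) :
    ‖A.map f‖ ≤ C * ‖A‖ :=
  (norm_le_iff (by positivity)).2 fun _ _ =>
    (hf _).trans (mul_le_mul_of_nonneg_left (norm_entry_le_entrywise_sup_norm A) hC)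

theorem norm_one_le [NormedRing R] [DecidableEq m] : ‖(1 : Matrix m m R)‖ ≤ ‖(1 : R)‖ :=
  (norm_le_iff (norm_nonneg _)).2 fun i j => by
    rw [one_apply]; split_ifs <;> simp

theorem isUltrametricDist [NormedAddCommGroup R] [IsUltrametricDist R] :
    IsUltrametricDist (Matrix m n R) :=
  Pi.instIsUltrametricDist

-- Stated for the uniformity of the norm, which instance search does not identify with
-- `Matrix.instUniformSpace`.
theorem completeSpace [NormedAddCommGroup R] [CompleteSpace R] :
    @CompleteSpace (Matrix m n R) PseudoMetricSpace.toUniformSpace :=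
  Pi.complete _

variable [NormedRing R] [IsUltrametricDist R]

theorem norm_mul_le_of_isUltrametricDist (A : Matrix l m R) (B : Matrix m n R) :
    ‖A * B‖ ≤ ‖A‖ * ‖B‖ :=
  (norm_le_iff (by positivity)).2 fun _ _ =>
    norm_sum_le_of_forall_le_of_nonneg (by positivity) fun _ _ =>
      (norm_mul_le _ _).trans (mul_le_mul (norm_entry_le_entrywise_sup_norm A)
        (norm_entry_le_entrywise_sup_norm B) (norm_nonneg _) (norm_nonneg _))

noncomputable abbrev ultrametricNormedRing [DecidableEq m] : NormedRing (Matrix m m R) :=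
  { Matrix.normedAddCommGroup, Matrix.instRing with
    norm_mul_le := norm_mul_le_of_isUltrametricDist }

end Matrix

section MapMatrix

attribute [local instance] Matrix.ultrametricNormedRing Matrix.isUltrametricDist
  Matrix.completeSpace

variable {A₁ A₂ B : Type*} [NormedRing A₁] [NormedRing A₂] [NormedRing B]
  [IsUltrametricDist A₁] [IsUltrametricDist A₂] [IsUltrametricDist B]
  {φ₁ : A₁ →+* B} {φ₂ : A₂ →+* B} {K : ℝ} {m : Type*} [Fintype m] [DecidableEq m]

def SumLift.mapMatrix (s : SumLift φ₁ φ₂ K) (hK : 0 ≤ K) :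
    SumLift (φ₁.mapMatrix (m := m)) φ₂.mapMatrix K where
  left E := E.map s.left
  right E := E.map s.right
  map_left_add_map_right E := by ext; simp [s.map_left_add_map_right]
  norm_left_le E := Matrix.norm_map_le hK s.norm_left_le E
  norm_right_le E := Matrix.norm_map_le hK s.norm_right_le E

theorem SumLift.exists_units_matrix_eq_map_mul_map [CompleteSpace A₁] [CompleteSpace A₂]
    (s : SumLift φ₁ φ₂ K) (hK : 1 ≤ K)
    (hφ₁ : ∀ x, ‖φ₁ x‖ ≤ K * ‖x‖) (hφ₂ : ∀ x, ‖φ₂ x‖ ≤ K * ‖x‖)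
    (h₁ : ‖(1 : A₁)‖ ≤ K) (h₂ : ‖(1 : A₂)‖ ≤ K) {M : Matrix m m B}
    (hM : ∀ i j, ‖(M - 1) i j‖ ≤ 1 / (2 * K ^ 4)) :
    ∃ (u₁ : (Matrix m m A₁)ˣ) (u₂ : (Matrix m m A₂)ˣ), M = u₁.val.map φ₁ * u₂.val.map φ₂ := by
  have hK₀ : 0 ≤ K := zero_le_one.trans hK
  exact (s.mapMatrix hK₀).exists_units_eq_map_mul_map hK
    (Matrix.norm_map_le hK₀ hφ₁) (Matrix.norm_map_le hK₀ hφ₂)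
    (Matrix.norm_one_le.trans h₁) (Matrix.norm_one_le.trans h₂)
    (le_of_eq (by field_simp)) ((Matrix.norm_le_iff (by positivity)).2 hM)

end MapMatrix

theorem stmt5_general {R₁ R₂ G : Type*} [NormedRing R₁] [NormedRing R₂] [NormedRing G]
    [CompleteSpace R₁] [CompleteSpace R₂]
    [IsUltrametricDist R₁] [IsUltrametricDist R₂] [IsUltrametricDist G]
    (f₁ : R₁ →+* G) (f₂ : R₂ →+* G)
    (hb₁ : ∃ C : ℝ, ∀ x, ‖f₁ x‖ ≤ C * ‖x‖)
    (hb₂ : ∃ C : ℝ, ∀ x, ‖f₂ x‖ ≤ C * ‖x‖)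
    (hstrict : ∃ c₀ : ℝ, 0 < c₀ ∧
      ∀ γ : G, ∃ a b, f₁ a + f₂ b = γ ∧ ‖a‖ ≤ c₀ * ‖γ‖ ∧ ‖b‖ ≤ c₀ * ‖γ‖) :
    ∃ c : ℝ, 0 < c ∧ ∀ n : ℕ, 1 ≤ n → ∀ I : Matrix (Fin n) (Fin n) G, IsUnit I →
      (∀ i j, ‖(I - 1) i j‖ ≤ c) →
      ∃ (I₁ : (Matrix (Fin n) (Fin n) R₁)ˣ) (I₂ : (Matrix (Fin n) (Fin n) R₂)ˣ),
        I = (I₁.val.map f₁) * (I₂.val.map f₂) := by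
  obtain ⟨C₁, hC₁⟩ := hb₁
  obtain ⟨C₂, hC₂⟩ := hb₂
  obtain ⟨c₀, -, hc₀⟩ := hstrict
  choose a b hab ha hb using hc₀
  obtain ⟨K, hK, hKC₁, hKC₂, hKc₀, hK₁, hK₂⟩ : ∃ K : ℝ, 1 ≤ K ∧ C₁ ≤ K ∧ C₂ ≤ K ∧ c₀ ≤ K ∧
      ‖(1 : R₁)‖ ≤ K ∧ ‖(1 : R₂)‖ ≤ K :=
    ⟨max 1 (max C₁ (max C₂ (max c₀ (max ‖(1 : R₁)‖ ‖(1 : R₂)‖)))), by simp⟩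
  let s : SumLift f₁ f₂ K :=
    ⟨a, b, hab, fun γ => (ha γ).trans (by gcongr), fun γ => (hb γ).trans (by gcongr)⟩
  refine ⟨1 / (2 * K ^ 4), by positivity, fun n _ I _ hI => ?_⟩
  exact s.exists_units_matrix_eq_map_mul_map hK (fun x => (hC₁ x).trans (by gcongr))
    (fun x => (hC₂ x).trans (by gcongr)) hK₁ hK₂ hI

/-- after Kedlaya–Liu [KL15, Lemma 2.7.1], matrix factorization.
Let `f₁ : R₁ → Γ` and `f₂ : R₂ → Γ` be bounded homomorphisms of (possibly
noncommutative) nonarchimedean Banach rings such that the sum map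
`R₁ ⊕ R₂ → Γ`, `(a,b) ↦ f₁ a + f₂ b`, is strictly surjective.  Then there is a
constant `c > 0` such that for every `n ≥ 1` and every invertible matrix
`I ∈ GL_n(Γ)` with `‖I − 1‖ ≤ c` (entrywise supremum norm), there are
invertible matrices `I₁ ∈ GL_n(R₁)` and `I₂ ∈ GL_n(R₂)` with
`I = f₁(I₁)·f₂(I₂)`. -/
theorem stmt5 {R₁ R₂ G : Type*} [NormedRing R₁] [NormedRing R₂] [NormedRing G]
    [CompleteSpace R₁] [CompleteSpace R₂] [CompleteSpace G]
    [IsUltrametricDist R₁] [IsUltrametricDist R₂] [IsUltrametricDist G]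
    (f₁ : R₁ →+* G) (f₂ : R₂ →+* G)
    (hb₁ : ∃ C : ℝ, ∀ x, ‖f₁ x‖ ≤ C * ‖x‖)
    (hb₂ : ∃ C : ℝ, ∀ x, ‖f₂ x‖ ≤ C * ‖x‖)
    (hstrict : ∃ c₀ : ℝ, 0 < c₀ ∧
      ∀ γ : G, ∃ a b, f₁ a + f₂ b = γ ∧ ‖a‖ ≤ c₀ * ‖γ‖ ∧ ‖b‖ ≤ c₀ * ‖γ‖) :
    ∃ c : ℝ, 0 < c ∧ ∀ n : ℕ, 1 ≤ n → ∀ I : Matrix (Fin n) (Fin n) G, IsUnit I →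
      (∀ i j, ‖(I - 1) i j‖ ≤ c) →
      ∃ (I₁ : (Matrix (Fin n) (Fin n) R₁)ˣ) (I₂ : (Matrix (Fin n) (Fin n) R₂)ˣ),
        I = (I₁.val.map f₁) * (I₂.val.map f₂) :=
  stmt5_general f₁ f₂ hb₁ hb₂ hstrict
end

section
/- Let (B_i, ι_i) be a directed system of nonarchimedean Banach rings with submetric transition maps ι_i, let B be the direct limit endowed with the infimum seminorm, and let B → C be an isometric homomorphism with dense image into a Banach ring C. Then every finitely generated projective right C-module arises, up to isomorphism, by base change from a finitely generated projective right B_i-module for some index i. -/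
/-!
Write `M` as the image of an idempotent matrix `O` over `C`. Density of the images of the `B i`,
together with the infimum formula for the norm, gives a matrix `p` over a single `B k` whose image
is close to `O` and which is already almost idempotent, with bounded norm, in `B k` itself. In the
Banach ring of matrices over `B k` the Newton iteration `x ↦ 3x² - 2x³` turns the defect
`e = x² - x` into `4e³ - 3e²`, so it converges to an idempotent `q` near `p`. Once the image `Q` of
`q` is close enough to `O`, the element `OQ + (1 - O)(1 - Q)` is a perturbation of `1`, hence a unit,
and it intertwines `Q` with `O`; right multiplication by it carries the image of `O` onto that of
`Q`.
-/

open Filter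

-- The `ℓ∞`-operator norm is submultiplicative over any normed ring.
attribute [local instance] Matrix.linftyOpNormedRing

namespace Matrix

variable {n α β : Type*} [Fintype n] [DecidableEq n] [NormedRing α] [NormedRing β]

-- Instance search does not see through `linftyOpNormedRing` to the product uniformity.
theorem linftyOp_completeSpace [CompleteSpace α] :
    @CompleteSpace (Matrix n n α) Matrix.linftyOpNormedRing.toUniformSpace :=
  inferInstanceAs (CompleteSpace (n → n → α))

theorem sum_norm_row_le_linfty_opNorm (A : Matrix n n α) (i : n) : ∑ j, ‖A i j‖ ≤ ‖A‖ := by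
  rw [linfty_opNorm_def]
  simpa only [NNReal.coe_sum, coe_nnnorm] using
    NNReal.coe_le_coe.2 (Finset.le_sup (f := fun i => ∑ j, ‖A i j‖₊) (Finset.mem_univ i))

theorem linfty_opNorm_lt_of_sum_norm_row_lt (A : Matrix n n α) {r : ℝ} (hr : 0 < r)
    (h : ∀ i, ∑ j, ‖A i j‖ < r) : ‖A‖ < r := by
  lift r to NNReal using hr.le
  rw [linfty_opNorm_def, NNReal.coe_lt_coe, Finset.sup_lt_iff (by exact_mod_cast hr)]
  intro i _
  rw [← NNReal.coe_lt_coe]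
  simpa only [NNReal.coe_sum, coe_nnnorm] using h i

theorem linfty_opNorm_map_le {f : α → β} (hf : ∀ x, ‖f x‖ ≤ ‖x‖) (A : Matrix n n α) :
    ‖A.map f‖ ≤ ‖A‖ := by
  rw [linfty_opNorm_def, linfty_opNorm_def, NNReal.coe_le_coe]
  exact Finset.sup_mono_fun fun i _ => Finset.sum_le_sum fun j _ => NNReal.coe_le_coe.1 (hf _)

end Matrix

attribute [local instance] Matrix.linftyOp_completeSpace

section BanachRing

variable {A : Type*} [NormedRing A]

theorem IsIdempotentElem.norm_mul_self_sub_le {O : A} (hO : IsIdempotentElem O) (P : A) :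
    ‖P * P - P‖ ≤ ‖P - O‖ * (‖P‖ + ‖O‖ + 1) := by
  have h : P * P - P = (P - O) * P + O * (P - O) - (P - O) + (O * O - O) := by noncomm_ring
  rw [h, hO.eq, sub_self, add_zero]
  have h₁ := norm_mul_le (P - O) P
  have h₂ := norm_mul_le O (P - O)
  have h₃ := norm_add_le ((P - O) * P) (O * (P - O))
  have h₄ := norm_sub_le ((P - O) * P + O * (P - O)) (P - O)
  nlinarith

theorem IsIdempotentElem.mul_conj_eq {O Q : A} (hO : IsIdempotentElem O) (hQ : IsIdempotentElem Q) :
    (O * Q + (1 - O) * (1 - Q)) * Q = O * (O * Q + (1 - O) * (1 - Q)) := by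
  have hl : (O * Q + (1 - O) * (1 - Q)) * Q = O * (Q * Q) + (1 - O) * (Q - Q * Q) := by
    noncomm_ring
  have hr : O * (O * Q + (1 - O) * (1 - Q)) = O * O * Q + (O - O * O) * (1 - Q) := by noncomm_ring
  rw [hl, hr, hO.eq, hQ.eq, sub_self, sub_self, mul_zero, zero_mul]

theorem IsIdempotentElem.isUnit_conj [CompleteSpace A] {O : A} (hO : IsIdempotentElem O) {Q : A}
    (h : ‖O + O - 1‖ * ‖Q - O‖ < 1) : IsUnit (O * Q + (1 - O) * (1 - Q)) := by
  have hlt : ‖(O + O - 1) * (O - Q)‖ < 1 :=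
    (norm_mul_le _ _).trans_lt (by rwa [norm_sub_rev O Q])
  have h1 : O * Q + (1 - O) * (1 - Q) =
      1 - (O + O - 1) * (O - Q) + ((O * O - O) + (O * O - O)) := by
    noncomm_ring
  rw [h1, hO.eq, sub_self, add_zero, add_zero]
  exact (Units.oneSub _ hlt).isUnit

end BanachRing

section Newton

variable {A : Type*} [NormedRing A]

def idempotentNewtonStep (x : A) : A := 3 • (x * x) - 2 • (x * x * x)

theorem idempotentNewtonStep_mul_self_sub (x : A) :
    idempotentNewtonStep x * idempotentNewtonStep x - idempotentNewtonStep x =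
      4 • (x * x - x) ^ 3 - 3 • (x * x - x) ^ 2 := by
  unfold idempotentNewtonStep
  noncomm_ring

theorem idempotentNewtonStep_sub (x : A) :
    idempotentNewtonStep x - x = (x * x - x) - 2 • ((x * x - x) * x) := by
  unfold idempotentNewtonStep
  noncomm_ring

theorem norm_idempotentNewtonStep_mul_self_sub_le {x : A} (hx : ‖x * x - x‖ ≤ 8⁻¹) :
    ‖idempotentNewtonStep x * idempotentNewtonStep x - idempotentNewtonStep x‖ ≤
      ‖x * x - x‖ / 2 := by
  rw [idempotentNewtonStep_mul_self_sub]
  set e := x * x - x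
  have h₃ : ‖4 • e ^ 3‖ ≤ 4 * ‖e‖ ^ 3 := by
    refine norm_nsmul_le.trans ?_
    push_cast
    exact mul_le_mul_of_nonneg_left (norm_pow_le' e (by norm_num)) (by norm_num)
  have h₂ : ‖3 • e ^ 2‖ ≤ 3 * ‖e‖ ^ 2 := by
    refine norm_nsmul_le.trans ?_
    push_cast
    exact mul_le_mul_of_nonneg_left (norm_pow_le' e (by norm_num)) (by norm_num)
  have he := norm_nonneg e
  nlinarith [norm_sub_le (4 • e ^ 3) (3 • e ^ 2), mul_nonneg he he]

theorem norm_idempotentNewtonStep_sub_le (x : A) :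
    ‖idempotentNewtonStep x - x‖ ≤ (1 + 2 * ‖x‖) * ‖x * x - x‖ := by
  rw [idempotentNewtonStep_sub]
  have h : ‖2 • ((x * x - x) * x)‖ ≤ 2 * (‖x * x - x‖ * ‖x‖) := by
    refine norm_nsmul_le.trans ?_
    push_cast
    exact mul_le_mul_of_nonneg_left (norm_mul_le _ _) (by norm_num)
  nlinarith [norm_sub_le (x * x - x) (2 • ((x * x - x) * x))]

theorem norm_idempotentNewtonStep_iterate_le {p : A} (hp : 8 * (‖p‖ + 1) * ‖p * p - p‖ ≤ 1)
    (k : ℕ) :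
    ‖idempotentNewtonStep^[k] p * idempotentNewtonStep^[k] p - idempotentNewtonStep^[k] p‖ ≤
        ‖p * p - p‖ / 2 ^ k ∧
      ‖idempotentNewtonStep^[k] p - p‖ ≤ 2 * (2 * ‖p‖ + 3) * ‖p * p - p‖ * (1 - 1 / 2 ^ k) := by
  set e := ‖p * p - p‖
  have he : 0 ≤ e := norm_nonneg _
  have hp₀ := norm_nonneg p
  have he₈ : e ≤ 8⁻¹ := by nlinarith
  induction k with
  | zero => exact ⟨by simp [e], by simp⟩
  | succ k ih =>
    obtain ⟨hdef, hdist⟩ := ih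
    set x := idempotentNewtonStep^[k] p
    have hr : 0 < 1 / (2 : ℝ) ^ k := by positivity
    have hr₁ : 1 / (2 : ℝ) ^ k ≤ 1 := div_le_one_of_le₀ (one_le_pow₀ (by norm_num)) (by positivity)
    have hsucc : 1 / (2 : ℝ) ^ (k + 1) = 1 / 2 ^ k / 2 := by rw [pow_succ]; field_simp
    have hx : ‖x‖ ≤ ‖p‖ + 1 := by
      have := norm_le_norm_add_norm_sub' x p
      nlinarith
    rw [Function.iterate_succ_apply', hsucc]
    constructor
    · calc _ ≤ ‖x * x - x‖ / 2 :=
            norm_idempotentNewtonStep_mul_self_sub_le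
              (hdef.trans ((div_le_self he (one_le_pow₀ (by norm_num))).trans he₈))
        _ ≤ e / 2 ^ k / 2 := by gcongr
        _ = e / 2 ^ (k + 1) := by rw [pow_succ, div_div]
    · have hstep := norm_idempotentNewtonStep_sub_le x
      have htri := norm_sub_le_norm_sub_add_norm_sub (idempotentNewtonStep x) x p
      have : ‖x * x - x‖ ≤ e * (1 / 2 ^ k) := by rw [mul_one_div]; exact hdef
      nlinarith [mul_le_mul hx this (norm_nonneg _) (by positivity)]

theorem exists_isIdempotentElem_norm_sub_le [CompleteSpace A] {p : A}
    (hp : 8 * (‖p‖ + 1) * ‖p * p - p‖ ≤ 1) :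
    ∃ q : A, IsIdempotentElem q ∧ ‖q - p‖ ≤ 2 * (2 * ‖p‖ + 3) * ‖p * p - p‖ := by
  set e := ‖p * p - p‖
  set x : ℕ → A := fun k => idempotentNewtonStep^[k] p
  have hbound : ∀ k, ‖x k * x k - x k‖ ≤ e / 2 ^ k ∧
      ‖x k - p‖ ≤ 2 * (2 * ‖p‖ + 3) * e * (1 - 1 / 2 ^ k) :=
    norm_idempotentNewtonStep_iterate_le hp
  have hx : ∀ k, ‖x k‖ ≤ ‖p‖ + 1 := fun k => by
    have := norm_le_norm_add_norm_sub' (x k) p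
    have := (hbound k).2
    have : 0 ≤ 2 * (2 * ‖p‖ + 3) * e * (1 / 2 ^ k) := by positivity
    nlinarith [norm_nonneg p]
  have hstep : ∀ k, dist (x k) (x (k + 1)) ≤ 2 * (2 * ‖p‖ + 3) * e / 2 / 2 ^ k := fun k => by
    rw [dist_comm, dist_eq_norm]
    calc ‖x (k + 1) - x k‖ ≤ (1 + 2 * ‖x k‖) * ‖x k * x k - x k‖ := by
          simp only [x, Function.iterate_succ_apply']
          exact norm_idempotentNewtonStep_sub_le _
      _ ≤ (2 * ‖p‖ + 3) * (e / 2 ^ k) :=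
          mul_le_mul (by linarith [hx k]) (hbound k).1 (norm_nonneg _) (by positivity)
      _ = 2 * (2 * ‖p‖ + 3) * e / 2 / 2 ^ k := by ring
  obtain ⟨q, hq⟩ := cauchySeq_tendsto_of_complete (cauchySeq_of_le_geometric_two hstep)
  refine ⟨q, ?_, ?_⟩
  · have hdef : Tendsto (fun k => x k * x k - x k) atTop (nhds 0) :=
      squeeze_zero_norm (fun k => (hbound k).1)
        (by simpa [div_eq_mul_inv] using (tendsto_pow_atTop_nhds_zero_of_lt_one
          (by norm_num : (0 : ℝ) ≤ 2⁻¹) (by norm_num)).const_mul e)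
    exact sub_eq_zero.1 (tendsto_nhds_unique ((hq.mul hq).sub hq) hdef)
  · rw [← dist_eq_norm, dist_comm]
    exact dist_le_of_le_geometric_two_of_tendsto₀ hstep hq

end Newton

theorem Matrix.vecMulLinear_mul {R n : Type*} [Ring R] [Fintype n] [DecidableEq n]
    (A B : Matrix n n R) : (A * B).vecMulLinear = B.vecMulLinear ∘ₗ A.vecMulLinear :=
  Matrix.toLinearMapRight'_mul A B

theorem Matrix.nonempty_range_vecMulLinear_equiv_of_mul_eq {R n : Type*} [Ring R] [Fintype n]
    [DecidableEq n] {O Q U : Matrix n n R} (hU : IsUnit U) (h : U * Q = O * U) :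
    Nonempty (LinearMap.range O.vecMulLinear ≃ₗ[R] LinearMap.range Q.vecMulLinear) := by
  obtain ⟨U, rfl⟩ := hU
  let e := Matrix.toLinearEquivRight'OfInv U.inv_mul U.mul_inv
  have hmap : (LinearMap.range O.vecMulLinear).map (e : (n → R) →ₗ[R] n → R) =
      LinearMap.range Q.vecMulLinear := by
    rw [← LinearMap.range_comp, ← LinearMap.range_comp_of_range_eq_top Q.vecMulLinear e.range]
    change LinearMap.range ((U : Matrix n n R).vecMulLinear ∘ₗ O.vecMulLinear) =
      LinearMap.range (Q.vecMulLinear ∘ₗ (U : Matrix n n R).vecMulLinear)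
    rw [← Matrix.vecMulLinear_mul, ← Matrix.vecMulLinear_mul, h]
  exact ⟨(e.submoduleMap _).trans (LinearEquiv.ofEq _ _ hmap)⟩

theorem Module.Finite.exists_isIdempotentElem_range_equiv (R M : Type*) [Ring R] [AddCommGroup M]
    [Module R M] [Module.Finite R M] [Module.Projective R M] :
    ∃ (n : ℕ) (O : Matrix (Fin n) (Fin n) R), IsIdempotentElem O ∧
      Nonempty (M ≃ₗ[R] LinearMap.range O.vecMulLinear) := by
  obtain ⟨n, π, σ, hπ, hσ, hπσ⟩ := Module.Finite.exists_comp_eq_id_of_projective R M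
  set O := LinearMap.toMatrixRight' (σ ∘ₗ π)
  have hO : O.vecMulLinear = σ ∘ₗ π := LinearMap.toMatrixRight'.symm_apply_apply _
  refine ⟨n, O, Matrix.toLinearMapRight'.injective ?_, ⟨?_⟩⟩
  · change (O * O).vecMulLinear = O.vecMulLinear
    rw [Matrix.vecMulLinear_mul, hO, LinearMap.comp_assoc, ← LinearMap.comp_assoc π, hπσ,
      LinearMap.id_comp]
  · rw [hO, LinearMap.range_comp_of_range_eq_top _ (LinearMap.range_eq_top.2 hπ)]
    exact LinearEquiv.ofInjective σ hσ

section DirectedSystem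

variable {ι : Type*} [Preorder ι] {B : ι → Type*} [∀ i, NormedRing (B i)] {C : Type*}
  [NormedRing C] (t : ∀ {i j : ι}, i ≤ j → (B i →+* B j)) (u : ∀ i, B i →+* C)

theorem norm_apply_le_of_eq_iInf (ht : ∀ {i j : ι} (h : i ≤ j) (x : B i), ‖t h x‖ ≤ ‖x‖)
    (hiso : ∀ (i : ι) (x : B i), ‖u i x‖ = ⨅ j : {j : ι // i ≤ j}, ‖t j.2 x‖) (i : ι) (x : B i) :
    ‖u i x‖ ≤ ‖x‖ := by
  rw [hiso]
  exact (ciInf_le ⟨0, Set.forall_mem_range.2 fun _ => norm_nonneg _⟩ ⟨i, le_rfl⟩).trans (ht _ x)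

theorem eventually_norm_lt_of_eq_iInf (ht : ∀ {i j : ι} (h : i ≤ j) (x : B i), ‖t h x‖ ≤ ‖x‖)
    (tcomp : ∀ {i j k : ι} (hij : i ≤ j) (hjk : j ≤ k) (x : B i),
      t hjk (t hij x) = t (hij.trans hjk) x)
    (hiso : ∀ (i : ι) (x : B i), ‖u i x‖ = ⨅ j : {j : ι // i ≤ j}, ‖t j.2 x‖)
    {i : ι} {x : B i} {r : ℝ} (hx : ‖u i x‖ < r) :
    ∀ᶠ k in atTop, ∀ h : i ≤ k, ‖t h x‖ < r := by
  have : Nonempty {j // i ≤ j} := ⟨⟨i, le_rfl⟩⟩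
  obtain ⟨⟨j, hij⟩, hj⟩ := exists_lt_of_ciInf_lt (hiso i x ▸ hx)
  filter_upwards [eventually_ge_atTop j] with k hjk hik
  calc ‖t hik x‖ = ‖t hjk (t hij x)‖ := by rw [tcomp]
    _ ≤ ‖t hij x‖ := ht _ _
    _ < r := hj

theorem eventually_linfty_opNorm_map_lt_of_eq_iInf {n : Type*} [Fintype n] [DecidableEq n]
    (ht : ∀ {i j : ι} (h : i ≤ j) (x : B i), ‖t h x‖ ≤ ‖x‖)
    (tcomp : ∀ {i j k : ι} (hij : i ≤ j) (hjk : j ≤ k) (x : B i),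
      t hjk (t hij x) = t (hij.trans hjk) x)
    (hiso : ∀ (i : ι) (x : B i), ‖u i x‖ = ⨅ j : {j : ι // i ≤ j}, ‖t j.2 x‖)
    {i : ι} {p : Matrix n n (B i)} {r : ℝ} (hp : ‖p.map (u i)‖ < r) :
    ∀ᶠ k in atTop, ∀ h : i ≤ k, ‖p.map (t h)‖ < r := by
  set η := (r - ‖p.map (u i)‖) / (Fintype.card n + 1)
  have hη : 0 < η := div_pos (by linarith) (by positivity)
  have hentry : ∀ a b, ∀ᶠ k in atTop, ∀ h : i ≤ k, ‖t h (p a b)‖ < ‖u i (p a b)‖ + η :=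
    fun a b => eventually_norm_lt_of_eq_iInf t u ht tcomp hiso (lt_add_of_pos_right _ hη)
  filter_upwards [eventually_all.2 fun a => eventually_all.2 (hentry a)] with k hk h
  refine Matrix.linfty_opNorm_lt_of_sum_norm_row_lt _ ((norm_nonneg _).trans_lt hp) fun a => ?_
  calc ∑ b, ‖t h (p a b)‖ ≤ ∑ b, (‖u i (p a b)‖ + η) :=
        Finset.sum_le_sum fun b _ => (hk a b h).le
    _ = ∑ b, ‖p.map (u i) a b‖ + Fintype.card n * η := by
        simp [Finset.sum_add_distrib]
    _ ≤ ‖p.map (u i)‖ + Fintype.card n * η :=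
        add_le_add_left (Matrix.sum_norm_row_le_linfty_opNorm _ a) _
    _ < r := by
        have : (Fintype.card n + 1) * η = r - ‖p.map (u i)‖ := by
          simp only [η]; field_simp
        nlinarith

theorem dense_iUnion_range_map [IsDirected ι (· ≤ ·)] [Nonempty ι] {m n : Type*} [Finite m]
    [Finite n] (hu : ∀ {i j : ι} (h : i ≤ j) (x : B i), u j (t h x) = u i x)
    (hdense : DenseRange fun q : Σ i, B i => u q.1 q.2) :
    Dense (⋃ i, Set.range fun p : Matrix m n (B i) => p.map (u i)) := by
  refine (dense_pi Set.univ fun _ _ => dense_pi Set.univ fun _ _ => hdense).mono ?_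
  intro A hA
  simp only [Set.mem_univ_pi, Set.mem_range] at hA
  choose q hq using hA
  obtain ⟨k, hk⟩ :=
    (eventually_all.2 fun a => eventually_all.2 fun b => eventually_ge_atTop (q a b).1).exists
  exact Set.mem_iUnion.2 ⟨k, Matrix.of fun a b => t (hk a b) (q a b).2, by ext a b; simp [hu, hq]⟩

theorem exists_map_near_norm_mul_self_sub_lt [IsDirected ι (· ≤ ·)] [Nonempty ι]
    (ht : ∀ {i j : ι} (h : i ≤ j) (x : B i), ‖t h x‖ ≤ ‖x‖)
    (tcomp : ∀ {i j k : ι} (hij : i ≤ j) (hjk : j ≤ k) (x : B i),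
      t hjk (t hij x) = t (hij.trans hjk) x)
    (hu : ∀ {i j : ι} (h : i ≤ j) (x : B i), u j (t h x) = u i x)
    (hiso : ∀ (i : ι) (x : B i), ‖u i x‖ = ⨅ j : {j : ι // i ≤ j}, ‖t j.2 x‖)
    (hdense : DenseRange fun q : Σ i, B i => u q.1 q.2)
    {n : ℕ} {O : Matrix (Fin n) (Fin n) C} (hO : IsIdempotentElem O) {ε : ℝ} (hε : 0 < ε) :
    ∃ (k : ι) (p : Matrix (Fin n) (Fin n) (B k)),
      ‖p.map (u k) - O‖ < ε ∧ ‖p * p - p‖ < ε ∧ ‖p‖ < ‖O‖ + 1 := by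
  set η := min ε (min 1 (ε / (2 * ‖O‖ + 2)))
  have hη : 0 < η := lt_min hε (lt_min one_pos (by positivity))
  have hηε : η ≤ ε := min_le_left _ _
  have hη₁ : η ≤ 1 := (min_le_right _ _).trans (min_le_left _ _)
  have hηO : η * (2 * ‖O‖ + 2) ≤ ε :=
    (le_div_iff₀ (by positivity)).1 ((min_le_right _ _).trans (min_le_right _ _))
  obtain ⟨_, hmem, hPO⟩ := (dense_iUnion_range_map t u hu hdense).exists_dist_lt O hη
  obtain ⟨i, p, rfl⟩ := Set.mem_iUnion.1 hmem
  rw [dist_comm, dist_eq_norm] at hPO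
  set P := p.map (u i)
  have hP : ‖P‖ < ‖O‖ + 1 := by linarith [norm_le_norm_add_norm_sub' P O]
  have hPP : ‖(p * p - p).map (u i)‖ < ε := by
    rw [Matrix.map_sub _ (map_sub (u i)), Matrix.map_mul]
    calc ‖P * P - P‖ ≤ ‖P - O‖ * (‖P‖ + ‖O‖ + 1) := hO.norm_mul_self_sub_le P
      _ < η * (2 * ‖O‖ + 2) := by
          apply mul_lt_mul hPO (by linarith) (by positivity) hη.le
      _ ≤ ε := hηO
  obtain ⟨k, hik, hk₁, hk₂⟩ := ((eventually_ge_atTop i).and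
    ((eventually_linfty_opNorm_map_lt_of_eq_iInf t u ht tcomp hiso hP).and
      (eventually_linfty_opNorm_map_lt_of_eq_iInf t u ht tcomp hiso hPP))).exists
  refine ⟨k, p.map (t hik), ?_, ?_, hk₁ hik⟩
  · have hmap : (p.map (t hik)).map (u k) = P := by ext a b; simp [P, hu]
    rw [hmap]
    exact hPO.trans_le hηε
  · rw [← Matrix.map_mul, ← Matrix.map_sub _ (map_sub (t hik))]
    exact hk₂ hik

theorem exists_isIdempotentElem_map_near [IsDirected ι (· ≤ ·)] [Nonempty ι]
    [∀ i, CompleteSpace (B i)]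
    (ht : ∀ {i j : ι} (h : i ≤ j) (x : B i), ‖t h x‖ ≤ ‖x‖)
    (tcomp : ∀ {i j k : ι} (hij : i ≤ j) (hjk : j ≤ k) (x : B i),
      t hjk (t hij x) = t (hij.trans hjk) x)
    (hu : ∀ {i j : ι} (h : i ≤ j) (x : B i), u j (t h x) = u i x)
    (hiso : ∀ (i : ι) (x : B i), ‖u i x‖ = ⨅ j : {j : ι // i ≤ j}, ‖t j.2 x‖)
    (hdense : DenseRange fun q : Σ i, B i => u q.1 q.2)
    {n : ℕ} {O : Matrix (Fin n) (Fin n) C} (hO : IsIdempotentElem O) {ε : ℝ} (hε : 0 < ε) :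
    ∃ (k : ι) (q : Matrix (Fin n) (Fin n) (B k)), IsIdempotentElem q ∧ ‖q.map (u k) - O‖ < ε := by
  set a := ‖O‖
  have ha : 0 ≤ a := norm_nonneg _
  set η := min (1 / (8 * (a + 2))) (ε / (4 * a + 11))
  have hη : 0 < η := lt_min (by positivity) (by positivity)
  have hη₈ : 8 * (a + 2) * η ≤ 1 := (le_div_iff₀' (by positivity)).1 (min_le_left _ _)
  have hηε : (4 * a + 11) * η ≤ ε := (le_div_iff₀' (by positivity)).1 (min_le_right _ _)
  obtain ⟨k, p, hpO, hpp, hp⟩ :=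
    exists_map_near_norm_mul_self_sub_lt t u ht tcomp hu hiso hdense hO hη
  have hp₀ := norm_nonneg p
  obtain ⟨q, hq, hqp⟩ := exists_isIdempotentElem_norm_sub_le (p := p) (by nlinarith)
  refine ⟨k, q, hq, ?_⟩
  have hsplit : q.map (u k) - O = (q - p).map (u k) + (p.map (u k) - O) := by
    rw [Matrix.map_sub _ (map_sub (u k))]; abel
  have hmap := Matrix.linfty_opNorm_map_le (norm_apply_le_of_eq_iInf t u ht hiso k) (q - p)
  rw [hsplit]
  calc ‖(q - p).map (u k) + (p.map (u k) - O)‖ ≤ ‖q - p‖ + ‖p.map (u k) - O‖ :=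
        (norm_add_le _ _).trans (by linarith)
    _ < (4 * a + 10) * η + η := by nlinarith [norm_nonneg (p * p - p)]
    _ ≤ ε := by linarith

end DirectedSystem

theorem stmt6_general {ι : Type*} [Preorder ι] [IsDirected ι (· ≤ ·)] [Nonempty ι]
    (B : ι → Type*) [∀ i, NormedRing (B i)] [∀ i, CompleteSpace (B i)]
    {C : Type*} [NormedRing C] [CompleteSpace C]
    (t : ∀ {i j : ι}, i ≤ j → (B i →+* B j))
    (ht : ∀ {i j : ι} (h : i ≤ j) (x : B i), ‖t h x‖ ≤ ‖x‖)
    (tcomp : ∀ {i j k : ι} (hij : i ≤ j) (hjk : j ≤ k) (x : B i),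
      t hjk (t hij x) = t (hij.trans hjk) x)
    (u : ∀ i, B i →+* C)
    (hu : ∀ {i j : ι} (h : i ≤ j) (x : B i), u j (t h x) = u i x)
    (hiso : ∀ (i : ι) (x : B i), ‖u i x‖ = ⨅ j : {j : ι // i ≤ j}, ‖t j.2 x‖)
    (hdense : DenseRange fun q : Σ i, B i => u q.1 q.2)
    {M : Type*} [AddCommGroup M] [Module C M]
    [Module.Finite C M] [Module.Projective C M] :
    ∃ (n : ℕ) (i : ι) (Q : Matrix (Fin n) (Fin n) (B i)), Q * Q = Q ∧
      Nonempty (M ≃ₗ[C] LinearMap.range (Matrix.vecMulLinear (Q.map (u i)))) := by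
  obtain ⟨n, O, hO, ⟨eM⟩⟩ := Module.Finite.exists_isIdempotentElem_range_equiv C M
  set c := ‖O + O - 1‖
  obtain ⟨i, Q, hQ, hQO⟩ := exists_isIdempotentElem_map_near t u ht tcomp hu hiso hdense hO
    (inv_pos.2 (by positivity : 0 < c + 1))
  have hQC : IsIdempotentElem (Q.map (u i)) := hQ.map (u i).mapMatrix
  have hsmall : c * ‖Q.map (u i) - O‖ < 1 :=
    calc c * ‖Q.map (u i) - O‖ ≤ c * (c + 1)⁻¹ := by gcongr
      _ < 1 := by rw [← div_eq_mul_inv, div_lt_one (by positivity)]; linarith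
  obtain ⟨e⟩ := Matrix.nonempty_range_vecMulLinear_equiv_of_mul_eq (hO.isUnit_conj hsmall)
    (hO.mul_conj_eq hQC)
  exact ⟨n, i, Q, hQ, ⟨eM.trans e⟩⟩

/-- after Kedlaya–Liu [KL16, Lemma 5.6.8].
Let `(B_i, ι_i)` be a directed system of nonarchimedean Banach rings with
submetric transition maps, `B` its direct limit with the infimum seminorm, and
`B → C` an isometric homomorphism with dense image into a Banach ring `C`
(encoded here by the compatible maps `u i : B i → C`, the isometry condition
`hiso` for the infimum seminorm, and the density `hdense`).  Then every
finitely generated projective right `C`-module arises, up to isomorphism, by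
base change from a finitely generated projective `B_i`-module for some `i`
(the `B_i`-module being the image of an idempotent matrix `Q`, whose base
change is the image of `Q.map (u i)`). -/
theorem stmt6 {ι : Type*} [Preorder ι] [IsDirected ι (· ≤ ·)] [Nonempty ι]
    (B : ι → Type*) [∀ i, NormedRing (B i)] [∀ i, CompleteSpace (B i)]
    [∀ i, IsUltrametricDist (B i)]
    {C : Type*} [NormedRing C] [CompleteSpace C] [IsUltrametricDist C]
    (t : ∀ {i j : ι}, i ≤ j → (B i →+* B j))
    (ht : ∀ {i j : ι} (h : i ≤ j) (x : B i), ‖t h x‖ ≤ ‖x‖)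
    (tcomp : ∀ {i j k : ι} (hij : i ≤ j) (hjk : j ≤ k) (x : B i),
      t hjk (t hij x) = t (hij.trans hjk) x)
    (u : ∀ i, B i →+* C)
    (hu : ∀ {i j : ι} (h : i ≤ j) (x : B i), u j (t h x) = u i x)
    (hiso : ∀ (i : ι) (x : B i), ‖u i x‖ = ⨅ j : {j : ι // i ≤ j}, ‖t j.2 x‖)
    (hdense : DenseRange fun q : Σ i, B i => u q.1 q.2)
    {M : Type*} [AddCommGroup M] [Module C M]
    [Module.Finite C M] [Module.Projective C M] :
    ∃ (n : ℕ) (i : ι) (Q : Matrix (Fin n) (Fin n) (B i)), Q * Q = Q ∧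
      Nonempty (M ≃ₗ[C] LinearMap.range (Matrix.vecMulLinear (Q.map (u i)))) :=
  stmt6_general B t ht tcomp u hu hiso hdense
end
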